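/- arXiv:2602.04414 — 4 statements merged into one kernel-verified Lean document; each statement's English description precedes it below -/
import Mathlib

section
/- Fix h ∈ (0, 1/10) and let t ∈ ℂ satisfy |Im t| ≤ 2h, −h ≤ Re t ≤ 2 − h, |t| ≥ h, and |t − 1| ≥ h. Then |sin(πt)| > h/2. -/
/-!
Write `t = x + iy`, so that `|sin(πt)|² = sin²(πx) + sinh²(πy)`. If `|y| ≥ h/2`, then
`|sin(πt)| ≥ |sinh(πy)| ≥ π|y| > h/2`. Otherwise the excluded disks force `x` to stay more than
`h/2` away from `0` and `1` (as `|t - n| ≤ |x - n| + |y|`), and at least `h` away from `2`, while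
`−h ≤ x ≤ 2 − h`; so `dist(x, ℤ) > h/4`, and `|sin(πx)| ≥ 2 dist(x, ℤ)` gives `|sin(πt)| > h/2`.
-/

open Real

namespace Complex

lemma normSq_sin (z : ℂ) : normSq (sin z) = Real.sin z.re ^ 2 + Real.sinh z.im ^ 2 := by
  rw [sin_eq, ← ofReal_sin, ← ofReal_cosh, ← ofReal_cos, ← ofReal_sinh, normSq_apply]
  simp only [add_re, add_im, mul_re, mul_im, ofReal_re, ofReal_im, I_re, I_im]
  linear_combination Real.sin z.re ^ 2 * Real.cosh_sq z.im +
    Real.sinh z.im ^ 2 * Real.sin_sq_add_cos_sq z.re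

lemma abs_sin_re_le_norm_sin (z : ℂ) : |Real.sin z.re| ≤ ‖sin z‖ := by
  refine (sq_le_sq.mp ?_).trans_eq (abs_norm _)
  rw [Complex.sq_norm, normSq_sin]
  exact le_add_of_nonneg_right (sq_nonneg _)

lemma abs_im_le_norm_sin (z : ℂ) : |z.im| ≤ ‖sin z‖ := by
  have hsinh : |Real.sinh z.im| ≤ ‖sin z‖ := by
    refine (sq_le_sq.mp ?_).trans_eq (abs_norm _)
    rw [Complex.sq_norm, normSq_sin]
    exact le_add_of_nonneg_left (sq_nonneg _)
  rw [Real.abs_sinh] at hsinh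
  exact (Real.self_le_sinh_iff.mpr (abs_nonneg _)).trans hsinh

end Complex

lemma two_mul_abs_sub_int_le_abs_sin_pi_mul (x : ℝ) (n : ℤ) (hx : |x - n| ≤ 1 / 2) :
    2 * |x - n| ≤ |Real.sin (π * x)| := by
  have hsin : |Real.sin (π * x)| = |Real.sin (π * (x - n))| := by
    rw [show π * x = π * (x - n) + n * π by ring, Real.sin_add_int_mul_pi, abs_mul,
      abs_neg_one_zpow, one_mul]
  have hπx : |π * (x - n)| ≤ π / 2 := by
    rw [abs_mul, abs_of_pos pi_pos]
    nlinarith [pi_pos]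
  calc 2 * |x - n| = 2 / π * |π * (x - n)| := by
        rw [abs_mul, abs_of_pos pi_pos]; field_simp
    _ ≤ |Real.sin (π * x)| := hsin ▸ Real.mul_abs_le_abs_sin hπx

lemma lt_abs_sin_pi_mul_of_forall_int (x c : ℝ)
    (hx : ∀ n : ℤ, |x - n| ≤ 1 / 2 → c < |x - n|) : 2 * c < |Real.sin (π * x)| := by
  have hround := abs_sub_round x
  calc 2 * c < 2 * |x - round x| := by linarith [hx _ hround]
    _ ≤ |Real.sin (π * x)| := two_mul_abs_sub_int_le_abs_sin_pi_mul x _ hround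

theorem stmt3_general (h : ℝ) (hh : h ∈ Set.Ioo (0:ℝ) (1/10)) (t : ℂ)
    (h2 : -h ≤ t.re) (h3 : t.re ≤ 2 - h)
    (h4 : h ≤ ‖t‖) (h5 : h ≤ ‖t - 1‖) :
    h / 2 < ‖Complex.sin ((Real.pi : ℂ) * t)‖ := by
  obtain ⟨hh0, hh1⟩ := hh
  have him := Complex.abs_im_le_norm_sin (π * t)
  have hre := Complex.abs_sin_re_le_norm_sin (π * t)
  rw [Complex.im_ofReal_mul, abs_mul, abs_of_pos pi_pos] at him
  rw [Complex.re_ofReal_mul] at hre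
  rcases le_or_gt (h / 2) |t.im| with hy | hy
  · nlinarith [pi_gt_three]
  suffices hdist : ∀ n : ℤ, |t.re - n| ≤ 1 / 2 → h / 4 < |t.re - n| by
    linarith [lt_abs_sin_pi_mul_of_forall_int t.re (h / 4) hdist]
  intro n hn
  obtain ⟨hn_lo, hn_hi⟩ := abs_le.mp hn
  have hn0 : -1 < n := by exact_mod_cast (by linarith : (-1 : ℝ) < n)
  have hn2 : n < 3 := by exact_mod_cast (by linarith : (n : ℝ) < 3)
  interval_cases n
  · rw [Int.cast_zero, sub_zero]
    linarith [Complex.norm_le_abs_re_add_abs_im t]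
  · have hnorm := Complex.norm_le_abs_re_add_abs_im (t - 1)
    simp only [Complex.sub_re, Complex.one_re, Complex.sub_im, Complex.one_im, sub_zero] at hnorm
    push_cast
    linarith
  · push_cast
    linarith [le_abs_self (t.re - 2), neg_abs_le (t.re - 2)]

/-- For `h ∈ (0,1/10)` and `t` in the region `D_h(0,1)`
(i.e. `|Im t| ≤ 2h`, `−h ≤ Re t ≤ 2−h`, `|t| ≥ h`, `|t−1| ≥ h`),
one has `|sin(πt)| > h/2`. -/
theorem stmt3 (h : ℝ) (hh : h ∈ Set.Ioo (0:ℝ) (1/10)) (t : ℂ)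
    (h1 : |t.im| ≤ 2 * h) (h2 : -h ≤ t.re) (h3 : t.re ≤ 2 - h)
    (h4 : h ≤ ‖t‖) (h5 : h ≤ ‖t - 1‖) :
    h / 2 < ‖Complex.sin ((Real.pi : ℂ) * t)‖ :=
  stmt3_general h hh t h2 h3 h4 h5
end

section
/- Let F : ℂ → ℂ be an entire function such that |F(λ) − 2cos(πλ)| ≤ C/|λ| for all |λ| ≥ R. Fix h ∈ (0,1/10) and t ∈ ℂ with |sin(πt)| > h/2. Then there exist M > 0 and N ∈ ℕ such that for every integer n with |n| > N, the equation F(λ) = 2cos(πt) has exactly one solution λ (counted with multiplicity) in the disk {λ : |λ − (2n + t)| < M/|n|}, and exactly one solution in the disk {λ : |λ − (2n − t)| < M/|n|}. -/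
/-!
Write `F = 2 cos (π ·) + E`. Since `E = O(1/λ)` is entire, Cauchy's estimate on unit disks gives
`E' → 0` at infinity. Near `λ₀ = 2n + s` (with `s = ±t`) the free discriminant has derivative
`-2π sin (πλ)`, which by periodicity and continuity stays close to `a = -2π sin (πs) ≠ 0`, so
on the disk of radius `M/|n|` around `λ₀` the function `F` approximates `z ↦ a z` with constant
`‖a‖/2`, uniformly for large `|n|`. On the other hand `F λ₀ - 2 cos (πs) = E λ₀ = O(1/n)`, and the
quantitative inverse function theorem yields exactly one solution in the disk, at which
`F' ≠ 0` because `‖F' - a‖ ≤ ‖a‖/2` there.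
-/

open Complex Metric Set Filter Topology Bornology
open scoped Real

section LocalInversion

variable {𝕜 : Type*} [RCLike 𝕜] {f : 𝕜 → 𝕜} {s : Set 𝕜} {a c w : 𝕜} {r : ℝ}

theorem approximatesLinearOn_toSpanSingleton_of_nnnorm_deriv_sub_le {K : NNReal}
    (hs : Convex ℝ s) (hf : ∀ z ∈ s, DifferentiableAt 𝕜 f z)
    (hf' : ∀ z ∈ s, ‖deriv f z - a‖₊ ≤ K) :
    ApproximatesLinearOn f (ContinuousLinearMap.toSpanSingleton 𝕜 a) s K := by
  refine ApproximatesLinearOn.approximatesLinearOn_iff_lipschitzOnWith.2 ?_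
  refine hs.lipschitzOnWith_of_nnnorm_hasDerivWithin_le (f' := fun z => deriv f z - a)
    (fun z hz => ?_) hf'
  have hL := (ContinuousLinearMap.toSpanSingleton 𝕜 a).hasDerivAt (x := z)
  simpa using ((hf z hz).hasDerivAt.sub hL).hasDerivWithinAt

theorem existsUnique_eq_and_deriv_ne_zero_of_norm_deriv_sub_le
    (hf : DifferentiableOn 𝕜 f (ball c r))
    (hf' : ∀ z ∈ ball c r, ‖deriv f z - a‖ ≤ ‖a‖ / 2)
    (hw : ‖f c - w‖ < ‖a‖ * r / 2) :
    (∃! z, z ∈ ball c r ∧ f z = w) ∧ ∀ z ∈ ball c r, f z = w → deriv f z ≠ 0 := by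
  have ha : a ≠ 0 := by
    rintro rfl
    simp only [norm_zero, zero_mul, zero_div] at hw
    exact (norm_nonneg _).not_gt hw
  have ha' : 0 < ‖a‖ := norm_pos_iff.2 ha
  set L := ContinuousLinearEquiv.unitsEquivAut 𝕜 (Units.mk0 a ha)
  have hL : (L : 𝕜 →L[𝕜] 𝕜) = ContinuousLinearMap.toSpanSingleton 𝕜 a := by ext; simp [L]
  have hLsymm : ‖(L.symm : 𝕜 →L[𝕜] 𝕜)‖₊ = ‖a‖₊⁻¹ := by
    have : (L.symm : 𝕜 →L[𝕜] 𝕜) = ContinuousLinearMap.toSpanSingleton 𝕜 a⁻¹ := by ext; simp [L]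
    rw [this]; ext; simp
  have happrox : ApproximatesLinearOn f (L : 𝕜 →L[𝕜] 𝕜) (ball c r) (‖a‖₊ / 2) :=
    hL ▸ approximatesLinearOn_toSpanSingleton_of_nnnorm_deriv_sub_le (convex_ball c r)
      (fun z hz => hf.differentiableAt (isOpen_ball.mem_nhds hz))
      (fun z hz => by rw [← NNReal.coe_le_coe]; simpa using hf' z hz)
  have hlt : ‖a‖₊ / 2 < ‖(L.symm : 𝕜 →L[𝕜] 𝕜)‖₊⁻¹ := by
    rw [hLsymm, inv_inv]; exact NNReal.half_lt_self (nnnorm_ne_zero_iff.2 ha)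
  refine ⟨?_, fun z hz _ h0 => ?_⟩
  · have hε : 2 * ‖f c - w‖ / ‖a‖ < r := by
      rw [div_lt_iff₀ ha']; linarith
    obtain ⟨z, hz, hfz⟩ := happrox.surjOn_closedBall_of_nonlinearRightInverse
      L.toNonlinearRightInverse (by positivity) (closedBall_subset_ball hε) (a := w) (by
        show w ∈ closedBall _ (((‖(L.symm : 𝕜 →L[𝕜] 𝕜)‖₊ : ℝ)⁻¹ - _) * _)
        rw [hLsymm, mem_closedBall, dist_comm, dist_eq_norm]
        push_cast
        field_simp
        norm_num)
    exact ⟨z, ⟨closedBall_subset_ball hε hz, hfz⟩, fun y ⟨hy, hfy⟩ =>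
      happrox.injOn (Or.inr hlt) hy (closedBall_subset_ball hε hz) (hfy.trans hfz.symm)⟩
  · have := hf' z hz
    rw [h0, zero_sub, norm_neg] at this
    linarith

end LocalInversion

theorem Int.exists_nat_forall_lt_abs_of_eventually_cofinite {p : ℤ → Prop}
    (h : ∀ᶠ n in cofinite, p n) : ∃ N : ℕ, ∀ n : ℤ, (N : ℤ) < |n| → p n := by
  rw [Int.cofinite_eq, eventually_sup, eventually_atBot, eventually_atTop] at h
  obtain ⟨⟨a, ha⟩, b, hb⟩ := h
  refine ⟨a.natAbs + b.natAbs, fun n hn => ?_⟩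
  rcases lt_abs.1 hn with hn | hn
  · exact hb n (by omega)
  · exact ha n (by omega)

theorem tendsto_abs_intCast_cofinite_atTop :
    Tendsto (fun n : ℤ => |(n : ℝ)|) cofinite atTop :=
  tendsto_norm_cocompact_atTop.comp Int.tendsto_coe_cofinite

theorem tendsto_zero_of_norm_le_div_norm {α E : Type*} [SeminormedAddCommGroup α]
    [SeminormedAddCommGroup E] {f : α → E} {C R : ℝ} (hf : ∀ z, R ≤ ‖z‖ → ‖f z‖ ≤ C / ‖z‖) :
    Tendsto f (cobounded α) (𝓝 0) :=
  squeeze_zero_norm' ((eventually_cobounded_le_norm R).mono hf)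
    (tendsto_const_nhds.div_atTop tendsto_norm_cobounded_atTop)

theorem Complex.tendsto_deriv_cobounded_zero {E : Type*} [NormedAddCommGroup E]
    [NormedSpace ℂ E] {f : ℂ → E} (hf : Differentiable ℂ f) {L : E}
    (hL : Tendsto f (cobounded ℂ) (𝓝 L)) : Tendsto (deriv f) (cobounded ℂ) (𝓝 0) := by
  refine Metric.tendsto_nhds.2 fun ε hε => ?_
  obtain ⟨R, -, hR⟩ := hasBasis_cobounded_norm.eventually_iff.1
    (Metric.tendsto_nhds.1 hL (ε / 4) (by positivity))
  filter_upwards [eventually_cobounded_le_norm (R + 1)] with z hz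
  have hmaps : MapsTo f (ball z 1) (closedBall (f z) (ε / 2)) := by
    intro y hy
    have hRy : R ≤ ‖y‖ := by
      have := norm_sub_norm_le z y
      rw [mem_ball, dist_eq_norm, norm_sub_rev] at hy
      linarith
    have hRz : R ≤ ‖z‖ := by linarith
    rw [mem_closedBall]
    linarith [dist_triangle_right (f y) (f z) L, hR hRy, hR hRz]
  have := Complex.norm_deriv_le_div_of_mapsTo_ball hf.differentiableOn hmaps one_pos
  rw [dist_zero_right]
  linarith

theorem Complex.hasDerivAt_two_mul_cos_pi_mul (z : ℂ) :
    HasDerivAt (fun z : ℂ => 2 * cos (π * z)) (-(2 * π) * sin (π * z)) z :=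
  (((hasDerivAt_id' z).const_mul (π : ℂ)).ccos.const_mul 2).congr_deriv (by ring)

theorem Complex.sin_pi_mul_two_mul_intCast_add (n : ℤ) (z : ℂ) :
    sin (π * (2 * n + z)) = sin (π * z) := by
  rw [← sin_add_int_mul_two_pi (π * z) n]; ring_nf

theorem Complex.cos_pi_mul_two_mul_intCast_add (n : ℤ) (z : ℂ) :
    cos (π * (2 * n + z)) = cos (π * z) := by
  rw [← cos_add_int_mul_two_pi (π * z) n]; ring_nf

theorem two_mul_abs_intCast_sub_le_norm (n : ℤ) (s z : ℂ) :
    2 * |(n : ℝ)| - ‖s‖ - ‖z - (2 * n + s)‖ ≤ ‖z‖ := by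
  have h2n : ‖(2 * n : ℂ)‖ = 2 * |(n : ℝ)| := by simp
  have h := (norm_sub_le _ _).trans (add_le_add_left (norm_sub_le z (z - (2 * n + s))) ‖s‖)
  rw [show z - (z - (2 * n + s)) - s = 2 * n by ring, h2n] at h
  linarith

theorem norm_deriv_sub_neg_two_pi_mul_sin_le {F : ℂ → ℂ} {z : ℂ} (hF : DifferentiableAt ℂ F z)
    (s : ℂ) :
    ‖deriv F z - -(2 * π) * sin (π * s)‖ ≤
      ‖deriv (fun z => F z - 2 * cos (π * z)) z‖ + 2 * π * ‖sin (π * z) - sin (π * s)‖ := by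
  have hcos := hasDerivAt_two_mul_cos_pi_mul z
  rw [deriv_fun_sub hF hcos.differentiableAt, hcos.deriv]
  calc ‖deriv F z - -(2 * π) * sin (π * s)‖
      = ‖(deriv F z - -(2 * π) * sin (π * z)) - 2 * π * (sin (π * z) - sin (π * s))‖ := by
        ring_nf
    _ ≤ _ := (norm_sub_le _ _).trans_eq (by simp [Real.pi_pos.le])

theorem norm_sub_two_mul_cos_pi_mul_le_of_abs_ge {F : ℂ → ℂ} {C R : ℝ}
    (hbound : ∀ z : ℂ, R ≤ ‖z‖ → ‖F z - 2 * cos (π * z)‖ ≤ C / ‖z‖) {s : ℂ} {n : ℤ}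
    (hn : |R| + ‖s‖ + 1 ≤ |(n : ℝ)|) :
    ‖F (2 * n + s) - 2 * cos (π * s)‖ ≤ |C| / |(n : ℝ)| := by
  have hc := two_mul_abs_intCast_sub_le_norm n s (2 * n + s)
  rw [sub_self, norm_zero] at hc
  have hn₀ : 0 < |(n : ℝ)| := by linarith [abs_nonneg R, norm_nonneg s]
  rw [← cos_pi_mul_two_mul_intCast_add n s]
  calc ‖F (2 * n + s) - 2 * cos (π * (2 * n + s))‖ ≤ C / ‖2 * (n : ℂ) + s‖ :=
        hbound _ (by linarith [le_abs_self R])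
    _ ≤ |C| / |(n : ℝ)| :=
        div_le_div₀ (abs_nonneg C) (le_abs_self C) hn₀ (by linarith [abs_nonneg R])

theorem eventually_existsUnique_mem_ball_two_mul_intCast_add {F : ℂ → ℂ}
    (hF : Differentiable ℂ F) {C R : ℝ}
    (hbound : ∀ z : ℂ, R ≤ ‖z‖ → ‖F z - 2 * cos (π * z)‖ ≤ C / ‖z‖)
    {s : ℂ} {M : ℝ} (hM : |C| < π * ‖sin (π * s)‖ * M) :
    ∀ᶠ n : ℤ in cofinite,
      (∃! z, z ∈ ball (2 * (n : ℂ) + s) (M / |(n : ℝ)|) ∧ F z = 2 * cos (π * s)) ∧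
        ∀ z ∈ ball (2 * (n : ℂ) + s) (M / |(n : ℝ)|), F z = 2 * cos (π * s) →
          deriv F z ≠ 0 := by
  set σ := ‖sin (π * s)‖
  have hσM : 0 < π * σ * M := (abs_nonneg C).trans_lt hM
  have hM0 : 0 < M := pos_of_mul_pos_right hσM (by positivity)
  have hσ : 0 < σ := pos_of_mul_pos_right (pos_of_mul_pos_left hσM hM0.le) Real.pi_pos.le
  have hE : Differentiable ℂ fun z => F z - 2 * cos (π * z) :=
    hF.sub fun z => (hasDerivAt_two_mul_cos_pi_mul z).differentiableAt
  obtain ⟨R₁, -, hR₁⟩ := hasBasis_cobounded_norm.eventually_iff.1 <|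
    Metric.tendsto_nhds.1 (tendsto_deriv_cobounded_zero hE
      (tendsto_zero_of_norm_le_div_norm hbound)) (π * σ / 2) (by positivity)
  obtain ⟨δ, hδ, hsin⟩ := Metric.continuousAt_iff.1
    (by fun_prop : ContinuousAt (fun u : ℂ => sin (π * u)) s) (σ / 4) (by positivity)
  filter_upwards [tendsto_abs_intCast_cofinite_atTop.eventually_gt_atTop (M / δ),
    tendsto_abs_intCast_cofinite_atTop.eventually_ge_atTop M,
    tendsto_abs_intCast_cofinite_atTop.eventually_ge_atTop (R₁ + ‖s‖ + 1),
    tendsto_abs_intCast_cofinite_atTop.eventually_ge_atTop (|R| + ‖s‖ + 1)]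
    with n hδn hMn hR₁n hRn
  set ν := |(n : ℝ)|
  have hν : 0 < ν := (div_pos hM0 hδ).trans hδn
  have hρδ : M / ν < δ := by rwa [div_lt_iff₀ hν, mul_comm, ← div_lt_iff₀ hδ]
  have hρ1 : M / ν ≤ 1 := (div_le_one hν).2 hMn
  have hnorm_a : ‖-(2 * (π : ℂ)) * sin (π * s)‖ = 2 * π * σ := by simp [σ, Real.pi_pos.le]
  refine existsUnique_eq_and_deriv_ne_zero_of_norm_deriv_sub_le (a := -(2 * π) * sin (π * s))
    hF.differentiableOn (fun z hz => ?_) ?_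
  · rw [mem_ball, dist_eq_norm] at hz
    have hsinz : ‖sin (π * z) - sin (π * s)‖ < σ / 4 := by
      have := hsin (x := z - 2 * n) (by rw [dist_eq_norm, sub_sub]; exact hz.trans hρδ)
      rwa [dist_eq_norm, ← sin_pi_mul_two_mul_intCast_add n, add_sub_cancel] at this
    have hdE : ‖deriv (fun z => F z - 2 * cos (π * z)) z‖ < π * σ / 2 := by
      have := two_mul_abs_intCast_sub_le_norm n s z
      simpa using hR₁ (show R₁ ≤ ‖z‖ by linarith)
    have := norm_deriv_sub_neg_two_pi_mul_sin_le (hF z) s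
    rw [hnorm_a]
    nlinarith [Real.pi_pos]
  · calc ‖F (2 * n + s) - 2 * cos (π * s)‖ ≤ |C| / ν :=
          norm_sub_two_mul_cos_pi_mul_le_of_abs_ge hbound hRn
      _ < π * σ * M / ν := div_lt_div_of_pos_right hM hν
      _ = ‖-(2 * (π : ℂ)) * sin (π * s)‖ * (M / ν) / 2 := by rw [hnorm_a]; ring

/-- Rouché-type localization of Bloch eigenvalues: if `F` is entire with
`|F(λ) − 2cos(πλ)| ≤ C/|λ|` for `|λ| ≥ R`, `h ∈ (0,1/10)` and `|sin(πt)| > h/2`,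
then there are `M > 0` and `N` such that for `|n| > N` the equation
`F(λ) = 2cos(πt)` has exactly one (simple) solution in each of the disks
of radius `M/|n|` around `2n + t` and `2n − t`. -/
theorem stmt4 (F : ℂ → ℂ) (hF : Differentiable ℂ F) (C R : ℝ)
    (hbound : ∀ z : ℂ, R ≤ ‖z‖ → ‖F z - 2 * Complex.cos ((Real.pi : ℂ) * z)‖ ≤ C / ‖z‖)
    (h : ℝ) (hh : h ∈ Set.Ioo (0:ℝ) (1/10)) (t : ℂ)
    (ht : h / 2 < ‖Complex.sin ((Real.pi : ℂ) * t)‖) :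
    ∃ M > (0:ℝ), ∃ N : ℕ, ∀ n : ℤ, (N : ℤ) < |n| →
      ((∃! z : ℂ, z ∈ Metric.ball (2 * (n : ℂ) + t) (M / |(n : ℝ)|) ∧
          F z = 2 * Complex.cos ((Real.pi : ℂ) * t)) ∧
        ∀ z ∈ Metric.ball (2 * (n : ℂ) + t) (M / |(n : ℝ)|),
          F z = 2 * Complex.cos ((Real.pi : ℂ) * t) → deriv F z ≠ 0) ∧
      ((∃! z : ℂ, z ∈ Metric.ball (2 * (n : ℂ) - t) (M / |(n : ℝ)|) ∧
          F z = 2 * Complex.cos ((Real.pi : ℂ) * t)) ∧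
        ∀ z ∈ Metric.ball (2 * (n : ℂ) - t) (M / |(n : ℝ)|),
          F z = 2 * Complex.cos ((Real.pi : ℂ) * t) → deriv F z ≠ 0) := by
  have hσ : 0 < ‖sin (π * t)‖ := (half_pos hh.1).trans ht
  set M := (|C| + 1) / (π * ‖sin (π * t)‖)
  have hM : |C| < π * ‖sin (π * t)‖ * M := by
    rw [mul_div_cancel₀ _ (by positivity)]; linarith
  have hM' : |C| < π * ‖sin (π * -t)‖ * M := by rwa [mul_neg, sin_neg, norm_neg]
  refine ⟨M, by positivity, Int.exists_nat_forall_lt_abs_of_eventually_cofinite ?_⟩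
  filter_upwards [eventually_existsUnique_mem_ball_two_mul_intCast_add hF hbound hM,
    eventually_existsUnique_mem_ball_two_mul_intCast_add hF hbound hM'] with n hplus hminus
  rw [mul_neg, cos_neg, ← sub_eq_add_neg] at hminus
  exact ⟨hplus, hminus⟩
end

section
/- Let F be entire with F(λ₀) = 2cos(πt₀), F^{(k)}(λ₀) = 0 for 1 ≤ k ≤ m−1, F^{(m)}(λ₀) ≠ 0, where t₀ ∈ ℂ with sin(πt₀) ≠ 0. Suppose λ(t) is a continuous function on a punctured neighborhood of t₀ with λ(t) → λ₀ as t → t₀ and F(λ(t)) = 2cos(πt). Then |λ(t) − λ₀| ∼ |t − t₀|^{1/m} as t → t₀, i.e., there exist constants 0 < c ≤ C such that c|t − t₀|^{1/m} ≤ |λ(t) − λ₀| ≤ C|t − t₀|^{1/m} for t near t₀. -/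
/-!
Since `sin (π t₀) ≠ 0`, the function `2 cos (π t) - 2 cos (π t₀)` has a simple zero at `t₀`,
while `F - F λ₀` has a zero of order exactly `m` at `λ₀`; an analytic function with a zero of
order `n` at `z₀` is `Θ((z - z₀) ^ n)` there. Composing with `λ(t) → λ₀` and using
`F (λ t) = 2 cos (π t)` gives `(λ t - λ₀) ^ m = Θ(t - t₀)`; taking `m`-th roots of the norms
yields the two-sided bound.
-/

open Filter Topology Asymptotics

namespace Asymptotics

variable {α : Type*} {l : Filter α}

theorem _root_.Filter.Tendsto.isTheta_const {E F : Type*} [NormedAddCommGroup E]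
    [NormedAddCommGroup F] {f : α → E} {y : E} {c : F} (h : Tendsto f l (𝓝 y)) (hy : y ≠ 0)
    (hc : c ≠ 0) : f =Θ[l] fun _ => c := by
  refine ⟨isBigO_const_of_tendsto h hc, (isBigO_const_left_iff_pos_le_norm hc).2
    ⟨‖y‖ / 2, by positivity, ?_⟩⟩
  exact h.norm.eventually (eventually_ge_nhds (half_lt_self (norm_pos_iff.2 hy)))

theorem IsTheta.comp_tendsto {β E F : Type*} [Norm E] [Norm F] {f : α → E} {g : α → F}
    {k : β → α} {l' : Filter β} (h : f =Θ[l] g) (hk : Tendsto k l' l) :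
    (f ∘ k) =Θ[l'] (g ∘ k) :=
  ⟨h.1.comp_tendsto hk, h.2.comp_tendsto hk⟩

theorem IsTheta.norm_left_of_pow {𝕜 𝕜' : Type*} [NormedField 𝕜] [NormedField 𝕜']
    {u : α → 𝕜} {v : α → 𝕜'} {m : ℕ} (hm : m ≠ 0) (h : (fun x => u x ^ m) =Θ[l] v) :
    (fun x => ‖u x‖) =Θ[l] fun x => ‖v x‖ ^ ((1 : ℝ) / m) := by
  have hnorm : (fun x => ‖u x‖ ^ m) =Θ[l] fun x => ‖v x‖ := by
    simpa only [norm_pow] using h.norm_left.norm_right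
  have hroot := hnorm.rpow (r := (1 : ℝ) / m) (.of_forall fun x => by positivity)
    (.of_forall fun x => norm_nonneg _)
  simpa only [one_div, Real.pow_rpow_inv_natCast (norm_nonneg _) hm] using hroot

theorem IsTheta.exists_pos_bounds {E F : Type*} [SeminormedAddCommGroup E]
    [SeminormedAddCommGroup F] {f : α → E} {g : α → F}
    (h : f =Θ[l] g) :
    ∃ c C : ℝ, 0 < c ∧ c ≤ C ∧ ∀ᶠ x in l, c * ‖g x‖ ≤ ‖f x‖ ∧ ‖f x‖ ≤ C * ‖g x‖ := by
  obtain ⟨C, hC⟩ := h.1.bound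
  obtain ⟨c', hc', hgf⟩ := h.2.exists_pos
  refine ⟨c'⁻¹, max C c'⁻¹, inv_pos.2 hc', le_max_right _ _, ?_⟩
  filter_upwards [hC, hgf.bound] with x hfg hgf
  refine ⟨?_, hfg.trans ?_⟩
  · rw [inv_mul_le_iff₀ hc']
    exact hgf
  · exact mul_le_mul_of_nonneg_right (le_max_left _ _) (norm_nonneg _)

end Asymptotics

section

variable {𝕜 E : Type*} [NontriviallyNormedField 𝕜] [NormedAddCommGroup E] [NormedSpace 𝕜 E]
  {f : 𝕜 → E} {z₀ : 𝕜} {n : ℕ}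

theorem AnalyticAt.isTheta_pow_of_analyticOrderAt_eq (hf : AnalyticAt 𝕜 f z₀)
    (h : analyticOrderAt f z₀ = n) : f =Θ[𝓝 z₀] fun z => (z - z₀) ^ n := by
  obtain ⟨g, hg, hg₀, hfg⟩ := hf.analyticOrderAt_eq_natCast.1 h
  have hg1 : g =Θ[𝓝 z₀] fun _ => (1 : 𝕜) := hg.continuousAt.tendsto.isTheta_const hg₀ one_ne_zero
  have hfg' : f =ᶠ[𝓝 z₀] fun z => (z - z₀) ^ n • g z := hfg
  simpa only [smul_eq_mul, mul_one] using hfg'.trans_isTheta ((isTheta_refl _ _).smul hg1)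

theorem analyticOrderAt_sub_eq_of_iteratedDeriv [CompleteSpace E] [CharZero 𝕜]
    (hf : AnalyticAt 𝕜 f z₀) (hn : n ≠ 0)
    (hzero : ∀ k, 0 < k → k < n → iteratedDeriv k f z₀ = 0) (hne : iteratedDeriv n f z₀ ≠ 0) :
    analyticOrderAt (f · - f z₀) z₀ = n := by
  have hderiv : ∀ k, 0 < k → iteratedDeriv k (f · - f z₀) z₀ = iteratedDeriv k f z₀ := by
    intro k hk
    obtain ⟨j, rfl⟩ := Nat.exists_eq_add_of_lt hk
    rw [zero_add, iteratedDeriv_succ', iteratedDeriv_succ', deriv_sub_const_fun]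
  rw [analyticOrderAt_eq_nat_iff_iteratedDeriv_eq_zero (f := (f · - f z₀)) (by fun_prop),
    hderiv n (Nat.pos_of_ne_zero hn)]
  refine ⟨fun k hk => ?_, hne⟩
  rcases Nat.eq_zero_or_pos k with rfl | hk₀
  · simp
  · rw [hderiv k hk₀, hzero k hk₀ hk]

end

theorem isTheta_two_mul_cos_pi_mul_sub {t₀ : ℂ} (hsin : Complex.sin (Real.pi * t₀) ≠ 0) :
    (fun t => 2 * Complex.cos (Real.pi * t) - 2 * Complex.cos (Real.pi * t₀)) =Θ[𝓝 t₀]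
      fun t => t - t₀ := by
  have hderiv : HasDerivAt (fun t : ℂ => 2 * Complex.cos (Real.pi * t))
      (2 * (-Complex.sin (Real.pi * t₀) * Real.pi)) t₀ := by
    simpa using (((hasDerivAt_id t₀).const_mul (Real.pi : ℂ)).ccos).const_mul (2 : ℂ)
  have hne : (2 * (-Complex.sin (Real.pi * t₀) * Real.pi)) ≠ 0 := by
    simp [hsin, Real.pi_ne_zero]
  have horder := AnalyticAt.analyticOrderAt_sub_eq_one_of_deriv_ne_zero (by fun_prop)
    (hderiv.deriv ▸ hne)
  simpa only [pow_one] using (AnalyticAt.isTheta_pow_of_analyticOrderAt_eq (by fun_prop) horder)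

theorem stmt11_general (F : ℂ → ℂ) (hF : Differentiable ℂ F) (lam₀ t₀ : ℂ) (m : ℕ) (hm : 1 ≤ m)
    (hval : F lam₀ = 2 * Complex.cos ((Real.pi : ℂ) * t₀))
    (hzero : ∀ k : ℕ, 1 ≤ k → k ≤ m - 1 → iteratedDeriv k F lam₀ = 0)
    (hne : iteratedDeriv m F lam₀ ≠ 0)
    (hsin : Complex.sin ((Real.pi : ℂ) * t₀) ≠ 0)
    (lam : ℂ → ℂ) (U : Set ℂ) (hU : U ∈ nhds t₀)
    (hlim : Tendsto lam (nhdsWithin t₀ {t₀}ᶜ) (nhds lam₀))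
    (heq : ∀ t ∈ U \ {t₀}, F (lam t) = 2 * Complex.cos ((Real.pi : ℂ) * t)) :
    ∃ c C : ℝ, 0 < c ∧ c ≤ C ∧
      ∀ᶠ t in nhdsWithin t₀ {t₀}ᶜ,
        c * ‖t - t₀‖ ^ ((1 : ℝ) / m) ≤ ‖lam t - lam₀‖ ∧
        ‖lam t - lam₀‖ ≤ C * ‖t - t₀‖ ^ ((1 : ℝ) / m) := by
  have hm₀ : m ≠ 0 := by omega
  have horder : analyticOrderAt (F · - F lam₀) lam₀ = m :=
    analyticOrderAt_sub_eq_of_iteratedDeriv (hF.analyticAt lam₀) hm₀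
      (fun k hk hkm => hzero k hk (by omega)) hne
  have hF_theta := ((hF.analyticAt lam₀).sub analyticAt_const).isTheta_pow_of_analyticOrderAt_eq
    horder |>.comp_tendsto hlim
  have hcurve : (fun t => F (lam t) - F lam₀) =ᶠ[𝓝[≠] t₀]
      fun t => 2 * Complex.cos (Real.pi * t) - 2 * Complex.cos (Real.pi * t₀) := by
    filter_upwards [sdiff_mem_nhdsWithin_compl hU {t₀}] with t ht
    rw [heq t ht, hval]
  have hpow : (fun t => (lam t - lam₀) ^ m) =Θ[𝓝[≠] t₀] fun t => t - t₀ :=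
    (hF_theta.symm.trans_eventuallyEq hcurve).trans
      ((isTheta_two_mul_cos_pi_mul_sub hsin).mono nhdsWithin_le_nhds)
  obtain ⟨c, C, hc, hcC, hbounds⟩ := (hpow.norm_left_of_pow hm₀).exists_pos_bounds
  refine ⟨c, C, hc, hcC, hbounds.mono fun t ht => ?_⟩
  simpa only [norm_norm, Real.norm_of_nonneg (Real.rpow_nonneg (norm_nonneg _) _)] using ht

/-- If `F` is entire with `F(λ₀) = 2cos(πt₀)`, `F^{(k)}(λ₀) = 0` for `1 ≤ k ≤ m−1`,
`F^{(m)}(λ₀) ≠ 0`, `sin(πt₀) ≠ 0`, and `λ(t)` is continuous on a punctured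
neighborhood of `t₀` with `λ(t) → λ₀` and `F(λ(t)) = 2cos(πt)`, then
`|λ(t) − λ₀| ∼ |t − t₀|^{1/m}` as `t → t₀`. -/
theorem stmt11 (F : ℂ → ℂ) (hF : Differentiable ℂ F) (lam₀ t₀ : ℂ) (m : ℕ) (hm : 1 ≤ m)
    (hval : F lam₀ = 2 * Complex.cos ((Real.pi : ℂ) * t₀))
    (hzero : ∀ k : ℕ, 1 ≤ k → k ≤ m - 1 → iteratedDeriv k F lam₀ = 0)
    (hne : iteratedDeriv m F lam₀ ≠ 0)
    (hsin : Complex.sin ((Real.pi : ℂ) * t₀) ≠ 0)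
    (lam : ℂ → ℂ) (U : Set ℂ) (hU : U ∈ nhds t₀)
    (hcont : ContinuousOn lam (U \ {t₀}))
    (hlim : Tendsto lam (nhdsWithin t₀ {t₀}ᶜ) (nhds lam₀))
    (heq : ∀ t ∈ U \ {t₀}, F (lam t) = 2 * Complex.cos ((Real.pi : ℂ) * t)) :
    ∃ c C : ℝ, 0 < c ∧ c ≤ C ∧
      ∀ᶠ t in nhdsWithin t₀ {t₀}ᶜ,
        c * ‖t - t₀‖ ^ ((1 : ℝ) / m) ≤ ‖lam t - lam₀‖ ∧
        ‖lam t - lam₀‖ ≤ C * ‖t - t₀‖ ^ ((1 : ℝ) / m) :=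
  stmt11_general F hF lam₀ t₀ m hm hval hzero hne hsin lam U hU hlim heq
end

section
/- Let c(x,λ), s(x,λ) be the fundamental solutions of the Dirac system J y' + Q y = λ y with c(0,λ) = (1,0)ᵀ, s(0,λ) = (0,1)ᵀ, and F(λ) = c₁(π,λ) + s₂(π,λ). Then F'(λ) = ∫₀^π [ s₁(π,λ)(c₁(x,λ)² + c₂(x,λ)²) + (s₂(π,λ) − c₁(π,λ))(c₁(x,λ)s₁(x,λ) + c₂(x,λ)s₂(x,λ)) − c₂(π,λ)(s₁(x,λ)² + s₂(x,λ)²) ] dx. -/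
/-!
Write the system as `y' = A(λ, x) y`. For a solution `u` at `λ` and `v` at `μ`, the Wronskian
`W(u, v) = u₁ v₂ - u₂ v₁` satisfies `W(u, v)' = (μ - λ) ⟨u, v⟩` with `⟨u, v⟩ = u₁ v₁ + u₂ v₂`,
so `W(w(π), U_μ(π)) - W(w(π), U_λ(π)) = (μ - λ) ∫₀^π ⟨w, U_μ⟩` for a fixed solution `w` at `λ` and
a family `U_μ` with initial value independent of `μ`. Grönwall's inequality makes `U_μ → U_λ`
uniformly on `[0, π]`, so the integral is continuous in `μ` and `μ ↦ W(w(π), U_μ(π))` has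
derivative `∫₀^π ⟨w, U_λ⟩` at `λ`. Finally `F(μ) = W(a(π), c_μ(π)) + W(b(π), s_μ(π))` for the
solutions `a = s₁(π) c - c₁(π) s` and `b = s₂(π) c - c₂(π) s` at `λ`, because the Wronskian of
`c` and `s` is `1`.
-/

open Set Filter Topology ContinuousLinearMap
open scoped NNReal

theorem hasDerivAt_of_sub_eq_mul {𝕜 : Type*} [NontriviallyNormedField 𝕜] {f g : 𝕜 → 𝕜} {x : 𝕜}
    (hg : ContinuousAt g x) (hfg : ∀ y, f y - f x = (y - x) * g y) : HasDerivAt f (g x) x := by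
  rw [hasDerivAt_iff_tendsto_slope]
  refine (hg.tendsto.mono_left nhdsWithin_le_nhds).congr'
    (eventually_nhdsWithin_of_forall fun y hy => ?_)
  rw [slope_def_field, hfg, mul_div_cancel_left₀ _ (sub_ne_zero.2 hy)]

theorem TendstoUniformlyOn.continuousLinearMap_apply₂ {ι α 𝕜 E F G : Type*}
    [NontriviallyNormedField 𝕜] [SeminormedAddCommGroup E] [NormedSpace 𝕜 E]
    [SeminormedAddCommGroup F] [NormedSpace 𝕜 F] [SeminormedAddCommGroup G] [NormedSpace 𝕜 G]
    (B : E →L[𝕜] F →L[𝕜] G) {g : α → E} {W : ι → α → F} {w : α → F} {l : Filter ι}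
    {s : Set α} (hg : ∃ C, ∀ x ∈ s, ‖g x‖ ≤ C) (h : TendstoUniformlyOn W w l s) :
    TendstoUniformlyOn (fun i x => B (g x) (W i x)) (fun x => B (g x) (w x)) l s := by
  obtain ⟨C, hC⟩ := hg
  rw [Metric.tendstoUniformlyOn_iff] at h ⊢
  intro ε hε
  have hK : 0 < (‖B‖ + 1) * (|C| + 1) := by positivity
  filter_upwards [h _ (div_pos hε hK)] with i hi x hx
  rw [dist_eq_norm, ← map_sub]
  calc ‖B (g x) (w x - W i x)‖ ≤ ‖B‖ * ‖g x‖ * ‖w x - W i x‖ := B.le_opNorm₂ _ _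
    _ ≤ (‖B‖ + 1) * (|C| + 1) * ‖w x - W i x‖ := by
        gcongr
        · linarith
        · linarith [hC x hx, le_abs_self C]
    _ < ε := by rw [← dist_eq_norm]; exact (lt_div_iff₀' hK).1 (hi x hx)

namespace Dirac

variable (p q : ℝ → ℂ)

/-- `J y' + Q y = λ y` is equivalent to `y' = field p q λ x y`. -/
noncomputable def field (lam : ℂ) (x : ℝ) : ℂ × ℂ →L[ℂ] ℂ × ℂ :=
  (q x • fst ℂ ℂ ℂ - p x • snd ℂ ℂ ℂ - lam • snd ℂ ℂ ℂ).prod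
    ((lam - p x) • fst ℂ ℂ ℂ - q x • snd ℂ ℂ ℂ)

@[simp]
theorem field_apply (lam : ℂ) (x : ℝ) (y : ℂ × ℂ) :
    field p q lam x y = (q x * y.1 - p x * y.2 - lam * y.2, (lam - p x) * y.1 - q x * y.2) :=
  rfl

noncomputable def pairing : ℂ × ℂ →L[ℝ] ℂ × ℂ →L[ℝ] ℂ :=
  (mul ℝ ℂ).bilinearComp (fst ℝ ℂ ℂ) (fst ℝ ℂ ℂ) + (mul ℝ ℂ).bilinearComp (snd ℝ ℂ ℂ) (snd ℝ ℂ ℂ)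

@[simp]
theorem pairing_apply (y z : ℂ × ℂ) : pairing y z = y.1 * z.1 + y.2 * z.2 := rfl

noncomputable def wronskian : ℂ × ℂ →L[ℝ] ℂ × ℂ →L[ℝ] ℂ :=
  (mul ℝ ℂ).bilinearComp (fst ℝ ℂ ℂ) (snd ℝ ℂ ℂ) - (mul ℝ ℂ).bilinearComp (snd ℝ ℂ ℂ) (fst ℝ ℂ ℂ)

@[simp]
theorem wronskian_apply (y z : ℂ × ℂ) : wronskian y z = y.1 * z.2 - y.2 * z.1 := rfl

theorem norm_field_apply_le (lam : ℂ) (x : ℝ) (y : ℂ × ℂ) :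
    ‖field p q lam x y‖ ≤ (‖p x‖ + ‖q x‖ + ‖lam‖) * ‖y‖ := by
  have h₁ : ‖y.1‖ ≤ ‖y‖ := norm_fst_le y
  have h₂ : ‖y.2‖ ≤ ‖y‖ := norm_snd_le y
  have hp := norm_nonneg (p x)
  have hq := norm_nonneg (q x)
  have hlam := norm_nonneg lam
  rw [field_apply, Prod.norm_def]
  refine max_le ?_ ?_
  · calc ‖q x * y.1 - p x * y.2 - lam * y.2‖
        ≤ ‖q x‖ * ‖y.1‖ + ‖p x‖ * ‖y.2‖ + ‖lam‖ * ‖y.2‖ := by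
          refine (norm_sub_le _ _).trans (add_le_add ((norm_sub_le _ _).trans ?_) ?_) <;> simp
      _ ≤ (‖p x‖ + ‖q x‖ + ‖lam‖) * ‖y‖ := by nlinarith
  · calc ‖(lam - p x) * y.1 - q x * y.2‖ ≤ (‖lam‖ + ‖p x‖) * ‖y.1‖ + ‖q x‖ * ‖y.2‖ := by
          refine (norm_sub_le _ _).trans (add_le_add ?_ ?_)
          · rw [norm_mul]; gcongr; exact norm_sub_le _ _
          · rw [norm_mul]
      _ ≤ (‖p x‖ + ‖q x‖ + ‖lam‖) * ‖y‖ := by nlinarith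

theorem lipschitzWith_field {lam : ℂ} {x : ℝ} {K : ℝ≥0} (hK : ‖p x‖ + ‖q x‖ + ‖lam‖ ≤ K) :
    LipschitzWith K (field p q lam x) :=
  LipschitzWith.of_dist_le_mul fun y z => by
    rw [dist_eq_norm, dist_eq_norm, ← map_sub]
    exact (norm_field_apply_le p q lam x _).trans (by gcongr)

theorem dist_field_field (lam mu : ℂ) (x : ℝ) (y : ℂ × ℂ) :
    dist (field p q lam x y) (field p q mu x y) = ‖lam - mu‖ * ‖y‖ := by
  have : field p q lam x y - field p q mu x y = (lam - mu) • (-y.2, y.1) := by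
    ext <;> simp <;> ring
  rw [dist_eq_norm, this, norm_smul]
  simp [Prod.norm_def, max_comm]

theorem wronskian_field_add_field (lam mu : ℂ) (x : ℝ) (y z : ℂ × ℂ) :
    wronskian y (field p q mu x z) + wronskian (field p q lam x y) z =
      (mu - lam) * pairing y z := by
  simp only [wronskian_apply, field_apply, pairing_apply]
  ring

def IsSolution (lam : ℂ) (u : ℝ → ℂ × ℂ) : Prop :=
  ∀ x, HasDerivAt u (field p q lam x (u x)) x

variable {p q} {lam mu : ℂ} {u v : ℝ → ℂ × ℂ}

theorem isSolution_prodMk {u₁ u₂ : ℝ → ℂ}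
    (h₁ : ∀ x, HasDerivAt u₁ (q x * u₁ x - p x * u₂ x - lam * u₂ x) x)
    (h₂ : ∀ x, HasDerivAt u₂ ((lam - p x) * u₁ x - q x * u₂ x) x) :
    IsSolution p q lam fun x => (u₁ x, u₂ x) :=
  fun x => (h₁ x).prodMk (h₂ x)

theorem IsSolution.continuous (hu : IsSolution p q lam u) : Continuous u :=
  continuous_iff_continuousAt.2 fun x => (hu x).continuousAt

theorem IsSolution.const_smul (hu : IsSolution p q lam u) (c : ℂ) :
    IsSolution p q lam (c • u) := fun x => by
  simpa only [Pi.smul_apply, map_smul] using (hu x).const_smul c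

theorem IsSolution.sub (hu : IsSolution p q lam u) (hv : IsSolution p q lam v) :
    IsSolution p q lam (u - v) := fun x => by
  simpa only [Pi.sub_apply, map_sub] using (hu x).sub (hv x)

theorem IsSolution.continuous_pairing (hu : IsSolution p q lam u) (hv : IsSolution p q mu v) :
    Continuous fun x => pairing (u x) (v x) :=
  (pairing.continuous.comp hu.continuous).clm_apply hv.continuous

theorem IsSolution.integral_pairing (hu : IsSolution p q lam u) (hv : IsSolution p q mu v)
    (a b : ℝ) :
    (mu - lam) * ∫ x in a..b, pairing (u x) (v x) =
      wronskian (u b) (v b) - wronskian (u a) (v a) := by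
  rw [← intervalIntegral.integral_const_mul]
  refine intervalIntegral.integral_eq_sub_of_hasDerivAt
    (f := fun x => wronskian (u x) (v x)) (fun x _ => ?_)
    ((continuous_const.mul (hu.continuous_pairing hv)).intervalIntegrable _ _)
  simpa only [wronskian_field_add_field] using
    wronskian.hasDerivAt_of_bilinear (fun _ => hu x) (fun _ => hv x)

theorem IsSolution.wronskian_eq (hu : IsSolution p q lam u) (hv : IsSolution p q lam v)
    (a b : ℝ) : wronskian (u b) (v b) = wronskian (u a) (v a) := by
  have h := hu.integral_pairing hv a b
  rw [sub_self, zero_mul] at h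
  exact sub_eq_zero.1 h.symm

theorem IsSolution.dist_le_gronwallBound {a b : ℝ} {K : ℝ≥0} {M : ℝ}
    (hu : IsSolution p q mu u) (hv : IsSolution p q lam v) (ha : u a = v a)
    (hK : ∀ x ∈ Ico a b, ‖p x‖ + ‖q x‖ + ‖mu‖ ≤ K) (hM : ∀ x ∈ Ico a b, ‖v x‖ ≤ M) :
    ∀ x ∈ Icc a b, dist (u x) (v x) ≤ gronwallBound 0 K (‖mu - lam‖ * M) (x - a) := by
  intro x hx
  -- `v` is an approximate solution of the equation at `mu`, with error `‖mu - lam‖ * ‖v‖`.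
  have h := dist_le_of_approx_trajectories_ODE_of_mem (v := fun t => ⇑(field p q mu t))
    (s := fun _ => univ) (f := u) (g := v) (f' := fun t => field p q mu t (u t))
    (g' := fun t => field p q lam t (v t)) (K := K) (εf := 0) (εg := ‖mu - lam‖ * M) (δ := 0)
    (fun x hx => (lipschitzWith_field p q (hK x hx)).lipschitzOnWith)
    hu.continuous.continuousOn (fun x _ => (hu x).hasDerivWithinAt)
    (fun x _ => by rw [dist_self]) (fun _ _ => trivial)
    hv.continuous.continuousOn (fun x _ => (hv x).hasDerivWithinAt)
    (fun x hx => by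
      rw [dist_field_field, norm_sub_rev]
      exact mul_le_mul_of_nonneg_left (hM x hx) (norm_nonneg _))
    (fun _ _ => trivial) (by rw [ha, dist_self]) x hx
  rwa [zero_add] at h

theorem tendstoUniformlyOn_of_isSolution {a b : ℝ} (hp : ContinuousOn p (Icc a b))
    (hq : ContinuousOn q (Icc a b)) {U : ℂ → ℝ → ℂ × ℂ} {u₀ : ℂ × ℂ}
    (hU : ∀ mu, IsSolution p q mu (U mu)) (hU₀ : ∀ mu, U mu a = u₀) (lam : ℂ) :
    TendstoUniformlyOn U (U lam) (𝓝 lam) (Icc a b) := by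
  obtain ⟨P, hP⟩ := isCompact_Icc.exists_bound_of_continuousOn (hp.norm.add hq.norm)
  obtain ⟨M, hM⟩ :=
    (isCompact_Icc (a := a) (b := b)).exists_bound_of_continuousOn (hU lam).continuous.continuousOn
  set K : ℝ≥0 := (P + ‖lam‖ + 1).toNNReal
  have hsmall :
      Tendsto (fun mu => gronwallBound 0 K (‖mu - lam‖ * M) (b - a)) (𝓝 lam) (𝓝 0) := by
    have : Continuous fun mu : ℂ => gronwallBound 0 K (‖mu - lam‖ * M) (b - a) :=
      (gronwallBound_continuous_ε _ _ _).comp (by fun_prop)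
    simpa [gronwallBound_ε0_δ0] using this.tendsto lam
  rw [Metric.tendstoUniformlyOn_iff]
  intro ε hε
  filter_upwards [hsmall.eventually (gt_mem_nhds hε), Metric.ball_mem_nhds lam one_pos]
    with mu hmuε hmu x hx
  have hK : ∀ y ∈ Ico a b, ‖p y‖ + ‖q y‖ + ‖mu‖ ≤ K := fun y hy => by
    have h₁ : ‖p y‖ + ‖q y‖ ≤ P := (le_abs_self _).trans (hP y (Ico_subset_Icc_self hy))
    have h₂ : ‖mu‖ ≤ ‖lam‖ + 1 := by
      linarith [norm_le_norm_add_norm_sub' mu lam, (mem_ball_iff_norm.1 hmu).le]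
    exact (by linarith : _ ≤ P + ‖lam‖ + 1).trans (Real.le_coe_toNNReal _)
  have hM₀ : 0 ≤ M := (norm_nonneg _).trans (hM x hx)
  rw [dist_comm]
  calc dist (U mu x) (U lam x) ≤ gronwallBound 0 K (‖mu - lam‖ * M) (x - a) :=
        (hU mu).dist_le_gronwallBound (hU lam) (by rw [hU₀, hU₀]) hK
          (fun y hy => hM y (Ico_subset_Icc_self hy)) x hx
    _ ≤ gronwallBound 0 K (‖mu - lam‖ * M) (b - a) :=
        gronwallBound_mono le_rfl (by positivity) K.2 (by linarith [hx.2])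
    _ < ε := hmuε

theorem hasDerivAt_wronskian_apply {a b : ℝ} (hab : a ≤ b) (hp : ContinuousOn p (Icc a b))
    (hq : ContinuousOn q (Icc a b)) {U : ℂ → ℝ → ℂ × ℂ} {u₀ : ℂ × ℂ}
    (hU : ∀ mu, IsSolution p q mu (U mu)) (hU₀ : ∀ mu, U mu a = u₀) {w : ℝ → ℂ × ℂ}
    (hw : IsSolution p q lam w) :
    HasDerivAt (fun mu => wronskian (w b) (U mu b))
      (∫ x in a..b, pairing (w x) (U lam x)) lam := by
  refine hasDerivAt_of_sub_eq_mul (g := fun mu => ∫ x in a..b, pairing (w x) (U mu x)) ?_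
    fun mu => ?_
  · have hconv := (tendstoUniformlyOn_of_isSolution hp hq hU hU₀ lam).continuousLinearMap_apply₂
      pairing (isCompact_Icc.exists_bound_of_continuousOn hw.continuous.continuousOn)
    rw [← uIcc_of_le hab] at hconv
    exact hconv.tendsto_intervalIntegral_of_continuousOn
      (Eventually.of_forall fun mu => (hw.continuous_pairing (hU mu)).continuousOn)
  · have hmu := hw.integral_pairing (hU mu) a b
    have hlam := hw.wronskian_eq (hU lam) a b
    rw [hU₀] at hmu hlam
    linear_combination -hmu - hlam

end Dirac

theorem stmt19_general (p q : ℝ → ℂ) (hp : Continuous p) (hq : Continuous q)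
    (c₁ c₂ s₁ s₂ : ℂ → ℝ → ℂ)
    (hc : ∀ lam : ℂ, ∀ x : ℝ,
      HasDerivAt (c₂ lam) ((lam - p x) * c₁ lam x - q x * c₂ lam x) x ∧
      HasDerivAt (c₁ lam) (q x * c₁ lam x - p x * c₂ lam x - lam * c₂ lam x) x)
    (hs : ∀ lam : ℂ, ∀ x : ℝ,
      HasDerivAt (s₂ lam) ((lam - p x) * s₁ lam x - q x * s₂ lam x) x ∧
      HasDerivAt (s₁ lam) (q x * s₁ lam x - p x * s₂ lam x - lam * s₂ lam x) x)
    (hc0 : ∀ lam : ℂ, c₁ lam 0 = 1 ∧ c₂ lam 0 = 0)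
    (hs0 : ∀ lam : ℂ, s₁ lam 0 = 0 ∧ s₂ lam 0 = 1) :
    ∀ lam : ℂ,
      HasDerivAt (fun μ : ℂ => c₁ μ Real.pi + s₂ μ Real.pi)
        (∫ x in (0:ℝ)..Real.pi,
          s₁ lam Real.pi * ((c₁ lam x) ^ 2 + (c₂ lam x) ^ 2) +
            (s₂ lam Real.pi - c₁ lam Real.pi) *
              (c₁ lam x * s₁ lam x + c₂ lam x * s₂ lam x) -
            c₂ lam Real.pi * ((s₁ lam x) ^ 2 + (s₂ lam x) ^ 2)) lam := by
  intro lam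
  set C : ℂ → ℝ → ℂ × ℂ := fun mu x => (c₁ mu x, c₂ mu x)
  set S : ℂ → ℝ → ℂ × ℂ := fun mu x => (s₁ mu x, s₂ mu x)
  have hC : ∀ mu, Dirac.IsSolution p q mu (C mu) := fun mu =>
    Dirac.isSolution_prodMk (fun x => (hc mu x).2) (fun x => (hc mu x).1)
  have hS : ∀ mu, Dirac.IsSolution p q mu (S mu) := fun mu =>
    Dirac.isSolution_prodMk (fun x => (hs mu x).2) (fun x => (hs mu x).1)
  have hW : c₁ lam Real.pi * s₂ lam Real.pi - c₂ lam Real.pi * s₁ lam Real.pi = 1 := by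
    simpa only [Dirac.wronskian_apply, (hc0 lam).1, (hc0 lam).2, (hs0 lam).1, (hs0 lam).2,
      mul_one, mul_zero, sub_zero, C, S] using (hC lam).wronskian_eq (hS lam) 0 Real.pi
  have ha := ((hC lam).const_smul (s₁ lam Real.pi)).sub ((hS lam).const_smul (c₁ lam Real.pi))
  have hb := ((hC lam).const_smul (s₂ lam Real.pi)).sub ((hS lam).const_smul (c₂ lam Real.pi))
  have hA := Dirac.hasDerivAt_wronskian_apply Real.pi_nonneg hp.continuousOn hq.continuousOn hC
    (fun mu => show C mu 0 = (1, 0) by simp [C, hc0]) ha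
  have hB := Dirac.hasDerivAt_wronskian_apply Real.pi_nonneg hp.continuousOn hq.continuousOn hS
    (fun mu => show S mu 0 = (0, 1) by simp [S, hs0]) hb
  refine ((hA.add hB).congr_deriv ?_).congr_of_eventuallyEq (Eventually.of_forall fun mu => ?_)
  · rw [← intervalIntegral.integral_add ((ha.continuous_pairing (hC lam)).intervalIntegrable _ _)
      ((hb.continuous_pairing (hS lam)).intervalIntegrable _ _)]
    refine intervalIntegral.integral_congr fun x _ => ?_
    simp only [Pi.sub_apply, Pi.smul_apply, Prod.smul_mk, smul_eq_mul, Prod.mk_sub_mk,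
      Dirac.pairing_apply, C, S]
    ring
  · simp only [Pi.sub_apply, Pi.smul_apply, Prod.smul_mk, smul_eq_mul, Prod.mk_sub_mk,
      Dirac.wronskian_apply, Pi.add_apply, C, S]
    linear_combination (-(c₁ mu Real.pi + s₂ mu Real.pi)) * hW

/-- Derivative of the Hill discriminant of the Dirac system: if `c(x,λ), s(x,λ)`
are the fundamental solutions of `J y' + Q y = λ y` with `c(0,λ) = (1,0)ᵀ`,
`s(0,λ) = (0,1)ᵀ`, depending differentiably on `λ`, and
`F(λ) = c₁(π,λ) + s₂(π,λ)`, then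
`F'(λ) = ∫₀^π [ s₁(π,λ)(c₁² + c₂²) + (s₂(π,λ) − c₁(π,λ))(c₁s₁ + c₂s₂)
              − c₂(π,λ)(s₁² + s₂²) ] dx`. -/
theorem stmt19 (p q : ℝ → ℂ) (hp : Continuous p) (hq : Continuous q)
    (c₁ c₂ s₁ s₂ : ℂ → ℝ → ℂ)
    (hc : ∀ lam : ℂ, ∀ x : ℝ,
      HasDerivAt (c₂ lam) ((lam - p x) * c₁ lam x - q x * c₂ lam x) x ∧
      HasDerivAt (c₁ lam) (q x * c₁ lam x - p x * c₂ lam x - lam * c₂ lam x) x)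
    (hs : ∀ lam : ℂ, ∀ x : ℝ,
      HasDerivAt (s₂ lam) ((lam - p x) * s₁ lam x - q x * s₂ lam x) x ∧
      HasDerivAt (s₁ lam) (q x * s₁ lam x - p x * s₂ lam x - lam * s₂ lam x) x)
    (hc0 : ∀ lam : ℂ, c₁ lam 0 = 1 ∧ c₂ lam 0 = 0)
    (hs0 : ∀ lam : ℂ, s₁ lam 0 = 0 ∧ s₂ lam 0 = 1)
    (hdiff : ∀ x : ℝ, Differentiable ℂ (fun lam => c₁ lam x) ∧
      Differentiable ℂ (fun lam => c₂ lam x) ∧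
      Differentiable ℂ (fun lam => s₁ lam x) ∧
      Differentiable ℂ (fun lam => s₂ lam x)) :
    ∀ lam : ℂ,
      HasDerivAt (fun μ : ℂ => c₁ μ Real.pi + s₂ μ Real.pi)
        (∫ x in (0:ℝ)..Real.pi,
          s₁ lam Real.pi * ((c₁ lam x) ^ 2 + (c₂ lam x) ^ 2) +
            (s₂ lam Real.pi - c₁ lam Real.pi) *
              (c₁ lam x * s₁ lam x + c₂ lam x * s₂ lam x) -
            c₂ lam Real.pi * ((s₁ lam x) ^ 2 + (s₂ lam x) ^ 2)) lam :=
  stmt19_general p q hp hq c₁ c₂ s₁ s₂ hc hs hc0 hs0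
end
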